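/- arXiv:2209.06599 — 5 statements merged into one kernel-verified Lean document; each statement's English description precedes it below -/
import Mathlib

section
/- In a ℂ-algebra with Clifford generators satisfying e_i e_j + e_j e_i = 2ε δ_{ij}, set α_1 = (sin(π/m), −cos(π/m), 0) and α_m = (0,1,0), and let s_γ = Σ γ_i e_i. Then (s_{α_1} s_{α_m})^m = (−1)^{m+1} ε^m · 1. -/
open Real

private lemma rot_pow {A : Type*} [Ring A] [Algebra ℂ A] (v : A) (hv : v * v = -1)
    (θ : ℝ) : ∀ k : ℕ, ((Real.cos θ : ℂ) • (1 : A) - (Real.sin θ : ℂ) • v) ^ k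
      = (Real.cos (k * θ) : ℂ) • (1 : A) - (Real.sin (k * θ) : ℂ) • v := by
  intro k
  induction k with
  | zero => simp
  | succ n ih =>
    rw [pow_succ, ih]
    have hc : Real.cos ((n + 1 : ℕ) * θ) = Real.cos (n * θ) * Real.cos θ
        - Real.sin (n * θ) * Real.sin θ := by
      push_cast; rw [add_mul, one_mul, Real.cos_add]
    have hs : Real.sin ((n + 1 : ℕ) * θ) = Real.sin (n * θ) * Real.cos θ
        + Real.cos (n * θ) * Real.sin θ := by
      push_cast; rw [add_mul, one_mul, Real.sin_add]
    rw [hc, hs, sub_mul, mul_sub, mul_sub, smul_mul_smul_comm, smul_mul_smul_comm,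
      smul_mul_smul_comm, smul_mul_smul_comm, hv]
    simp only [one_mul, mul_one]
    push_cast
    module

/-- The element s_{α_1} s_{α_m} satisfies (s_{α_1} s_{α_m})^m = (−1)^{m+1} ε^m · 1. -/
theorem stmt7 {A : Type*} [Ring A] [Algebra ℂ A] (ε : ℂ) (hε : ε = 1 ∨ ε = -1)
    (m : ℕ) (hm : 1 ≤ m) (e : Fin 3 → A)
    (hrel : ∀ i j, e i * e j + e j * e i = (2 * ε * (if i = j then 1 else 0)) • (1 : A)) :
    let s : (Fin 3 → ℝ) → A := fun γ => ∑ i, (γ i : ℂ) • e i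
    let α1 : Fin 3 → ℝ := ![Real.sin (π / m), -Real.cos (π / m), 0]
    let αm : Fin 3 → ℝ := ![Real.sin π, -Real.cos π, 0]
    (s α1 * s αm) ^ m = ((-1 : ℂ) ^ (m + 1) * ε ^ m) • (1 : A) := by
  intro s α1 αm
  have hε2 : ε * ε = 1 := by rcases hε with h | h <;> simp [h]
  -- squares of generators
  have hsq : ∀ i, e i * e i = ε • (1 : A) := by
    intro i
    have h := hrel i i
    rw [if_pos rfl, mul_one] at h
    have h2 : (2 : ℂ) • (e i * e i) = (2 * ε) • (1 : A) := by
      rw [two_smul]; exact h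
    calc e i * e i = (2⁻¹ : ℂ) • ((2 : ℂ) • (e i * e i)) := by
          rw [smul_smul]; norm_num
      _ = (2⁻¹ : ℂ) • ((2 * ε) • (1 : A)) := by rw [h2]
      _ = ε • (1 : A) := by rw [smul_smul]; congr 1; ring
  -- anticommutation
  have h10 : e 1 * e 0 = -(e 0 * e 1) := by
    have h := hrel 0 1
    rw [if_neg (by decide)] at h
    simp only [mul_zero, zero_smul] at h
    rw [add_comm] at h
    exact eq_neg_of_add_eq_zero_left h
  -- u = e0 * e1 squares to -1
  have huu : (e 0 * e 1) * (e 0 * e 1) = -1 := by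
    have step : (e 0 * e 1) * (e 0 * e 1) = -((e 0 * e 0) * (e 1 * e 1)) := by
      calc (e 0 * e 1) * (e 0 * e 1) = e 0 * (e 1 * e 0) * e 1 := by noncomm_ring
        _ = e 0 * (-(e 0 * e 1)) * e 1 := by rw [h10]
        _ = -((e 0 * e 0) * (e 1 * e 1)) := by noncomm_ring
    rw [step, hsq 0, hsq 1, smul_mul_smul_comm, one_mul, hε2, one_smul]
  have hvv : (ε • (e 0 * e 1)) * (ε • (e 0 * e 1)) = -1 := by
    rw [smul_mul_smul_comm, huu, hε2, one_smul]
  -- identify the product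
  have hX : s α1 * s αm
      = (-ε) • ((Real.cos (π / m) : ℂ) • (1 : A)
        - (Real.sin (π / m) : ℂ) • (ε • (e 0 * e 1))) := by
    have hs1 : s α1 = (Real.sin (π / m) : ℂ) • e 0 - (Real.cos (π / m) : ℂ) • e 1 := by
      simp only [s, α1, Fin.sum_univ_three, Matrix.cons_val_zero, Matrix.cons_val_one,
        Matrix.head_cons, Matrix.cons_val_two, Matrix.tail_cons, Complex.ofReal_zero,
        zero_smul, add_zero, Complex.ofReal_neg, neg_smul, sub_eq_add_neg]
    have hsm : s αm = e 1 := by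
      simp [s, αm, Fin.sum_univ_three]
    rw [hs1, hsm, sub_mul, smul_mul_assoc, smul_mul_assoc, hsq 1]
    rcases hε with rfl | rfl <;> match_scalars <;> ring
  rw [hX, smul_pow, rot_pow _ hvv]
  have hm0 : (m : ℝ) ≠ 0 := Nat.cast_ne_zero.mpr (by omega)
  have hmθ : (m : ℝ) * (π / m) = π := by field_simp
  rw [hmθ, Real.cos_pi, Real.sin_pi]
  push_cast
  rw [zero_smul, sub_zero, smul_smul]
  congr 1
  rw [neg_pow]
  ring
end

section
/- Suppose in an associative algebra A over ℂ, elements O_0, O_+, O_−, O_{123}, T_0, T_+, T_− satisfy: [O_0, O_+] = O_+ + {O_{123}, T_+} + ε[T_0, T_+], T_0 O_0 = O_0 T_0, T_+ O_0 = −O_0 T_+, O_{123} is central, and {O_0, {O_{123}, T_+}} = 0, {O_0, [T_0,T_+]} = 0 (which follow from T_± anticommuting with O_0 and commuting appropriately). Then L_+ := ½{O_0, O_+} satisfies [O_0, L_+] = L_+. -/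
/-- L_+ := ½{O_0, O_+} satisfies [O_0, L_+] = L_+. -/
theorem stmt8 {A : Type*} [Ring A] [Algebra ℂ A] (ε : ℂ) (hε : ε = 1 ∨ ε = -1)
    (O0 Op O123 T0 Tp : A)
    (h1 : O123 * O0 = O0 * O123) (h2 : O123 * Op = Op * O123)
    (h3 : T0 * O0 = O0 * T0) (h4 : Tp * O0 = -(O0 * Tp))
    (h5 : O0 * Op - Op * O0
        = Op + (O123 * Tp + Tp * O123) + ε • (T0 * Tp - Tp * T0)) :
    let Lp : A := (1 / 2 : ℂ) • (O0 * Op + Op * O0)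
    O0 * Lp - Lp * O0 = Lp := by
  intro Lp
  have h4' : O0 * Tp = -(Tp * O0) := by rw [h4, neg_neg]
  have hS : O0 * (O123 * Tp + Tp * O123) + (O123 * Tp + Tp * O123) * O0 = 0 := by
    have a1 : O0 * (O123 * Tp) = -(O123 * Tp * O0) := by
      rw [← mul_assoc, ← h1, mul_assoc, h4', mul_neg, ← mul_assoc]
    have a2 : O0 * (Tp * O123) = -(Tp * O123 * O0) := by
      rw [← mul_assoc, h4', neg_mul, mul_assoc, ← h1, ← mul_assoc]
    rw [mul_add, add_mul, a1, a2]; abel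
  have hD : O0 * (T0 * Tp - Tp * T0) + (T0 * Tp - Tp * T0) * O0 = 0 := by
    have a1 : O0 * (T0 * Tp) = -(T0 * Tp * O0) := by
      rw [← mul_assoc, ← h3, mul_assoc, h4', mul_neg, ← mul_assoc]
    have a2 : O0 * (Tp * T0) = -(Tp * T0 * O0) := by
      rw [← mul_assoc, h4', neg_mul, mul_assoc, ← h3, ← mul_assoc]
    rw [mul_sub, sub_mul, a1, a2]; abel
  have key : O0 * (O0 * Op + Op * O0) - (O0 * Op + Op * O0) * O0
      = O0 * Op + Op * O0 := by
    have e1 : O0 * (O0 * Op - Op * O0) + (O0 * Op - Op * O0) * O0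
        = O0 * (Op + (O123 * Tp + Tp * O123) + ε • (T0 * Tp - Tp * T0))
          + (Op + (O123 * Tp + Tp * O123) + ε • (T0 * Tp - Tp * T0)) * O0 := by
      rw [h5]
    have lhs_eq : O0 * (O0 * Op - Op * O0) + (O0 * Op - Op * O0) * O0
        = O0 * (O0 * Op + Op * O0) - (O0 * Op + Op * O0) * O0 := by
      noncomm_ring
    have rhs_eq : O0 * (Op + (O123 * Tp + Tp * O123) + ε • (T0 * Tp - Tp * T0))
          + (Op + (O123 * Tp + Tp * O123) + ε • (T0 * Tp - Tp * T0)) * O0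
        = (O0 * Op + Op * O0)
          + (O0 * (O123 * Tp + Tp * O123) + (O123 * Tp + Tp * O123) * O0)
          + ε • (O0 * (T0 * Tp - Tp * T0) + (T0 * Tp - Tp * T0) * O0) := by
      rw [mul_add, mul_add, add_mul, add_mul, mul_smul_comm, smul_mul_assoc, smul_add]
      abel
    rw [lhs_eq, rhs_eq, hS, hD] at e1
    simpa using e1
  show O0 * ((1 / 2 : ℂ) • (O0 * Op + Op * O0))
      - ((1 / 2 : ℂ) • (O0 * Op + Op * O0)) * O0
      = (1 / 2 : ℂ) • (O0 * Op + Op * O0)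
  rw [mul_smul_comm, smul_mul_assoc, ← smul_sub, key]
end

section
/- Under the same hypotheses with O_− in place of O_+ and the relation [O_0, O_−] = −O_− + {O_{123}, T_−} − ε[T_0, T_−], where T_− anticommutes with O_0, the operator L_− := ½{O_0, O_−} satisfies [O_0, L_−] = −L_−. -/
/-- L_− := ½{O_0, O_−} satisfies [O_0, L_−] = −L_−. -/
theorem stmt9 {A : Type*} [Ring A] [Algebra ℂ A] (ε : ℂ) (hε : ε = 1 ∨ ε = -1)
    (O0 Om O123 T0 Tm : A)
    (h1 : O123 * O0 = O0 * O123) (h2 : O123 * Om = Om * O123)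
    (h3 : T0 * O0 = O0 * T0) (h4 : Tm * O0 = -(O0 * Tm))
    (h5 : O0 * Om - Om * O0
        = -Om + (O123 * Tm + Tm * O123) - ε • (T0 * Tm - Tm * T0)) :
    let Lm : A := (1 / 2 : ℂ) • (O0 * Om + Om * O0)
    O0 * Lm - Lm * O0 = -Lm := by
  intro Lm
  have h4' : O0 * Tm = -(Tm * O0) := by rw [h4, neg_neg]
  have gen1 : ∀ X : A, X * O0 = O0 * X → O0 * (X * Tm) + (X * Tm) * O0 = 0 := by
    intro X hX
    rw [← mul_assoc, ← hX, mul_assoc, h4', mul_assoc]; noncomm_ring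
  have gen2 : ∀ X : A, X * O0 = O0 * X → O0 * (Tm * X) + (Tm * X) * O0 = 0 := by
    intro X hX
    rw [← mul_assoc O0, h4', mul_assoc Tm, hX, ← mul_assoc]; noncomm_ring
  have hZ1 := gen1 O123 h1
  have hZ2 := gen2 O123 h1
  have hZ3 := gen1 T0 h3
  have hZ4 := gen2 T0 h3
  have key : O0 * (O0 * Om + Om * O0) - (O0 * Om + Om * O0) * O0
      = -(O0 * Om + Om * O0) := by
    have e : O0 * (O0 * Om + Om * O0) - (O0 * Om + Om * O0) * O0
        = O0 * (O0 * Om - Om * O0) + (O0 * Om - Om * O0) * O0 := by noncomm_ring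
    rw [e, h5]
    have expand :
        O0 * (-Om + (O123 * Tm + Tm * O123) - ε • (T0 * Tm - Tm * T0)) +
          (-Om + (O123 * Tm + Tm * O123) - ε • (T0 * Tm - Tm * T0)) * O0
        = -(O0 * Om + Om * O0)
          + (O0 * (O123 * Tm) + (O123 * Tm) * O0)
          + (O0 * (Tm * O123) + (Tm * O123) * O0)
          - ε • ((O0 * (T0 * Tm) + (T0 * Tm) * O0)
              - (O0 * (Tm * T0) + (Tm * T0) * O0)) := by
      simp only [mul_add, add_mul, mul_sub, sub_mul, neg_mul, mul_neg,
        mul_smul_comm, smul_mul_assoc, smul_sub, smul_add]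
      abel
    rw [expand, hZ1, hZ2, hZ3, hZ4]
    simp
  show O0 * ((1 / 2 : ℂ) • (O0 * Om + Om * O0))
      - ((1 / 2 : ℂ) • (O0 * Om + Om * O0)) * O0
      = -((1 / 2 : ℂ) • (O0 * Om + Om * O0))
  rw [mul_smul_comm, smul_mul_assoc, ← smul_sub, key, smul_neg]
end

section
/- For operators L_{ij}, C_{ij} on a module such that L_{ii}=0, L_{ij} = −L_{ji}, C_{ij}=C_{ji}, where L_{ij} = x_iD_j − x_jD_i and C_{ij} = [D_i, x_j] for operators x_i (commuting among themselves), D_i (commuting among themselves) with [D_i, x_j] = [D_j, x_i], the identity L_{ij}L_{kl} + L_{ki}L_{jl} + L_{jk}L_{il} = L_{ij}C_{kl} + L_{ki}C_{jl} + L_{jk}C_{il} holds for all indices i,j,k,l. -/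
/-- The identity L_{ij}L_{kl} + L_{ki}L_{jl} + L_{jk}L_{il}
= L_{ij}C_{kl} + L_{ki}C_{jl} + L_{jk}C_{il}. -/
theorem stmt17 {A : Type*} [Ring A] [Algebra ℂ A] {ι : Type*} (x D : ι → A)
    (hx : ∀ i j, x i * x j = x j * x i) (hD : ∀ i j, D i * D j = D j * D i)
    (hC : ∀ i j, D i * x j - x j * D i = D j * x i - x i * D j)
    (i j k l : ι) :
    let L : ι → ι → A := fun a b => x a * D b - x b * D a
    let C : ι → ι → A := fun a b => D a * x b - x b * D a
    L i j * L k l + L k i * L j l + L j k * L i l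
      = L i j * C k l + L k i * C j l + L j k * C i l := by
  intro L C
  have hX : ∀ a b : ι, x a * x b - x b * x a = 0 := fun a b => sub_eq_zero.mpr (hx a b)
  have hDD : ∀ a b : ι, D a * D b - D b * D a = 0 := fun a b => sub_eq_zero.mpr (hD a b)
  have hH : ∀ a b : ι, (D a * x b - x b * D a) - (D b * x a - x a * D b) = 0 :=
    fun a b => sub_eq_zero.mpr (hC a b)
  rw [← sub_eq_zero]
  have key : L i j * L k l + L k i * L j l + L j k * L i l
      - (L i j * C k l + L k i * C j l + L j k * C i l)
      = (x i * x k - x k * x i) * (D j * D l)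
        - (x j * x k - x k * x j) * (D i * D l)
        - (x i * x j - x j * x i) * (D k * D l)
        + x i * ((D j * x k - x k * D j) - (D k * x j - x j * D k)) * D l
        + x k * ((D i * x j - x j * D i) - (D j * x i - x i * D j)) * D l
        + x j * ((D k * x i - x i * D k) - (D i * x k - x k * D i)) * D l
        - x i * (D j * D k - D k * D j) * x l
        + x j * (D i * D k - D k * D i) * x l
        - x k * (D i * D j - D j * D i) * x l := by
    simp only [L, C]
    noncomm_ring
  rw [key, hX, hX, hX, hDD, hDD, hDD, hH, hH, hH]
  noncomm_ring
end

section
/- In the classical case (κ = 0, so O_1 = O_2 = O_3 = 0), the element O_{123} := −(ε/2)e_1e_2e_3 + O_{12}e_3 + O_{31}e_2 + O_{23}e_1 with O_{ij} = L_{ij} + (ε/2)e_ie_j satisfies O_{123}² = −ε/4 + ε(O_{12}² + O_{31}² + O_{23}²). -/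
/-!
Put `w = e₀e₁e₂`, `D = L₀₁e₂ + L₂₀e₁ + L₁₂e₀` and `P = L₀₁e₀e₁ + L₂₀e₂e₀ + L₁₂e₁e₂`.
Since `w` is invariant under cyclic permutations of the `eᵢ`, the `ε/2`-terms of `O₁₂₃` add up
to `εw`, so `O₁₂₃ = εw + D`. The volume element `w` is central with `w² = -ε³`, and `wD = εP`.
The angular momenta satisfy `[L₀₁, L₂₀] = L₁₂` and its cyclic permutations, and these
commutators turn the cross terms of `D²` into `-P`, so `D² = ε(L₀₁² + L₂₀² + L₁₂²) - P`.
With `ε² = 1` both sides of the identity become `ε(L₀₁² + L₂₀² + L₁₂²) + P - ε`.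
-/

open MvPolynomial TensorProduct

namespace MvPolynomial

variable {R σ : Type*} [CommRing R]

theorem pderiv_pderiv_comm (i j : σ) (p : MvPolynomial σ R) :
    pderiv i (pderiv j p) = pderiv j (pderiv i p) := by
  have h : ⁅pderiv i, pderiv j⁆ = (0 : Derivation R (MvPolynomial σ R) (MvPolynomial σ R)) :=
    derivation_ext fun k => by
      classical
      rw [Derivation.commutator_apply, pderiv_X, pderiv_X, Pi.single_apply, Pi.single_apply]
      split_ifs <;> simp
  simpa [Derivation.commutator_apply, sub_eq_zero] using congrArg (· p) h

noncomputable def angularMomentum (a b : σ) : Module.End R (MvPolynomial σ R) :=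
  LinearMap.mulLeft R (X a) * (pderiv b).toLinearMap
    - LinearMap.mulLeft R (X b) * (pderiv a).toLinearMap

theorem angularMomentum_commutator {u v w : σ} (huv : u ≠ v) (hvw : v ≠ w) (huw : u ≠ w) :
    angularMomentum u v * angularMomentum w u - angularMomentum w u * angularMomentum u v
      = (angularMomentum v w : Module.End R (MvPolynomial σ R)) := by
  refine LinearMap.ext fun p => ?_
  simp only [angularMomentum, LinearMap.sub_apply, Module.End.mul_apply, LinearMap.mulLeft_apply,
    Derivation.coeFn_coe, map_sub, pderiv_mul, pderiv_X_self, pderiv_X_of_ne huv,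
    pderiv_X_of_ne huv.symm, pderiv_X_of_ne hvw, pderiv_X_of_ne hvw.symm,
    pderiv_X_of_ne huw, pderiv_X_of_ne huw.symm, pderiv_pderiv_comm v u p,
    pderiv_pderiv_comm w u p, pderiv_pderiv_comm w v p]
  ring

end MvPolynomial

section Clifford

variable {K A ι : Type*} [Field K] [Ring A] [Algebra K A]

def IsCliffordFamily [DecidableEq ι] (ε : K) (f : ι → A) : Prop :=
  ∀ i j, f i * f j + f j * f i = (2 * ε * if i = j then 1 else 0) • (1 : A)

namespace IsCliffordFamily

variable {ε : K}

section General

variable [DecidableEq ι] {f : ι → A}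

theorem mul_self [NeZero (2 : K)] (hf : IsCliffordFamily ε f) (i : ι) : f i * f i = ε • 1 := by
  have h := hf i i
  rw [if_pos rfl, mul_one, ← two_smul K, mul_smul] at h
  exact smul_right_injective A two_ne_zero h

theorem mul_comm_of_ne (hf : IsCliffordFamily ε f) {i j : ι} (hij : i ≠ j) :
    f i * f j = -(f j * f i) := by
  have h := hf i j
  rw [if_neg hij, mul_zero, zero_smul] at h
  exact eq_neg_of_add_eq_zero_left h

theorem map {B : Type*} [Ring B] [Algebra K B] (hf : IsCliffordFamily ε f) (φ : A →ₐ[K] B) :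
    IsCliffordFamily ε (φ ∘ f) := fun i j => by
  simp only [Function.comp_apply]
  rw [← map_mul, ← map_mul, ← map_add, hf i j, map_smul, map_one]

theorem mul_mul_self_of_ne [NeZero (2 : K)] (hf : IsCliffordFamily ε f) {i j : ι}
    (hij : i ≠ j) : f i * f j * (f i * f j) = -(ε ^ 2) • 1 := by
  rw [mul_assoc, ← mul_assoc (f j), hf.mul_comm_of_ne hij.symm, neg_mul, mul_neg, ← mul_assoc,
    ← mul_assoc, hf.mul_self, smul_mul_assoc, one_mul, smul_mul_assoc, hf.mul_self, smul_smul, sq,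
    neg_smul]

theorem mul_mul_self_of_commute [NeZero (2 : K)] (hf : IsCliffordFamily ε f) {x : A} {i : ι}
    (hx : Commute (f i) x) : x * f i * (x * f i) = ε • (x * x) := by
  rw [mul_assoc, ← mul_assoc (f i), hx.eq, mul_assoc, hf.mul_self, mul_smul_comm, mul_one,
    mul_smul_comm]

theorem mul_add_mul_of_ne (hf : IsCliffordFamily ε f) {x y : A} {i j : ι} (hij : i ≠ j)
    (hy : Commute (f i) y) (hx : Commute (f j) x) :
    x * f i * (y * f j) + y * f j * (x * f i) = (x * y - y * x) * (f i * f j) := by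
  rw [mul_assoc, ← mul_assoc (f i), hy.eq, mul_assoc y (f j), ← mul_assoc (f j), hx.eq,
    mul_assoc x, hf.mul_comm_of_ne hij.symm]
  noncomm_ring

end General

variable {f : Fin 3 → A}

theorem volume_cyclic (hf : IsCliffordFamily ε f) :
    f 2 * f 0 * f 1 = f 0 * f 1 * f 2 ∧ f 1 * f 2 * f 0 = f 0 * f 1 * f 2 := by
  have h20 := hf.mul_comm_of_ne (i := 2) (j := 0) (by decide)
  have h21 := hf.mul_comm_of_ne (i := 2) (j := 1) (by decide)
  have h10 := hf.mul_comm_of_ne (i := 1) (j := 0) (by decide)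
  constructor
  · rw [h20, neg_mul, mul_assoc, h21, mul_neg, neg_neg, mul_assoc]
  · rw [mul_assoc, h20, mul_neg, ← mul_assoc, h10, neg_mul, neg_neg]

theorem commute_volume (hf : IsCliffordFamily ε f) (i : Fin 3) :
    Commute (f i) (f 0 * f 1 * f 2) := by
  obtain ⟨h201, h120⟩ := hf.volume_cyclic
  fin_cases i
  · calc f 0 * (f 0 * f 1 * f 2) = f 0 * (f 1 * f 2 * f 0) := by rw [h120]
      _ = f 0 * f 1 * f 2 * f 0 := by simp only [mul_assoc]
  · calc f 1 * (f 0 * f 1 * f 2) = f 1 * (f 2 * f 0 * f 1) := by rw [h201]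
      _ = f 1 * f 2 * f 0 * f 1 := by simp only [mul_assoc]
      _ = f 0 * f 1 * f 2 * f 1 := by rw [h120]
  · calc f 2 * (f 0 * f 1 * f 2) = f 2 * f 0 * f 1 * f 2 := by simp only [mul_assoc]
      _ = f 0 * f 1 * f 2 * f 2 := by rw [h201]

section NeZeroTwo

variable [NeZero (2 : K)]

theorem volume_mul_two (hf : IsCliffordFamily ε f) :
    f 0 * f 1 * f 2 * f 2 = ε • (f 0 * f 1) := by
  rw [mul_assoc _ (f 2), hf.mul_self, mul_smul_comm, mul_one]

theorem volume_mul_one (hf : IsCliffordFamily ε f) :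
    f 0 * f 1 * f 2 * f 1 = ε • (f 2 * f 0) := by
  rw [← hf.volume_cyclic.1, mul_assoc _ (f 1), hf.mul_self, mul_smul_comm, mul_one]

theorem volume_mul_zero (hf : IsCliffordFamily ε f) :
    f 0 * f 1 * f 2 * f 0 = ε • (f 1 * f 2) := by
  rw [← hf.volume_cyclic.2, mul_assoc _ (f 0), hf.mul_self, mul_smul_comm, mul_one]

theorem volume_mul_self (hf : IsCliffordFamily ε f) :
    f 0 * f 1 * f 2 * (f 0 * f 1 * f 2) = -(ε ^ 3) • 1 := by
  rw [← mul_assoc, ← mul_assoc, hf.volume_mul_zero, smul_mul_assoc, smul_mul_assoc, mul_assoc,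
    hf.mul_mul_self_of_ne (by decide), smul_smul]
  congr 1
  ring

variable {a b c : A}

theorem dirac_mul_self (hf : IsCliffordFamily ε f)
    (hab : a * b - b * a = c) (hca : c * a - a * c = b) (hbc : b * c - c * b = a)
    (hfa : ∀ i, Commute (f i) a) (hfb : ∀ i, Commute (f i) b) (hfc : ∀ i, Commute (f i) c) :
    (a * f 2 + b * f 1 + c * f 0) * (a * f 2 + b * f 1 + c * f 0)
      = ε • (a * a + b * b + c * c) - (a * (f 0 * f 1) + b * (f 2 * f 0) + c * (f 1 * f 2)) := by
  have mul_self_add_add : ∀ x y z : A, (x + y + z) * (x + y + z)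
      = x * x + y * y + z * z + (x * y + y * x) + (x * z + z * x) + (y * z + z * y) := by
    intro x y z
    noncomm_ring
  rw [mul_self_add_add, hf.mul_mul_self_of_commute (hfa 2), hf.mul_mul_self_of_commute (hfb 1),
    hf.mul_mul_self_of_commute (hfc 0), hf.mul_add_mul_of_ne (by decide) (hfb 2) (hfa 1),
    hf.mul_add_mul_of_ne (by decide) (hfc 2) (hfa 0),
    hf.mul_add_mul_of_ne (by decide) (hfc 1) (hfb 0),
    hab, ← neg_sub, hca, hbc, hf.mul_comm_of_ne (i := 2) (j := 1) (by decide),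
    hf.mul_comm_of_ne (i := 1) (j := 0) (by decide)]
  simp only [mul_neg, neg_mul]
  module

end NeZeroTwo

theorem sq_O123 [CharZero K] (hε : ε ^ 2 = 1) (hf : IsCliffordFamily ε f)
    (hab : a * b - b * a = c) (hca : c * a - a * c = b) (hbc : b * c - c * b = a)
    (hfa : ∀ i, Commute (f i) a) (hfb : ∀ i, Commute (f i) b) (hfc : ∀ i, Commute (f i) c) :
    ((-(ε / 2)) • (f 0 * f 1 * f 2) + (a + (ε / 2) • (f 0 * f 1)) * f 2
        + (b + (ε / 2) • (f 2 * f 0)) * f 1 + (c + (ε / 2) • (f 1 * f 2)) * f 0) ^ 2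
      = (-(ε / 4)) • (1 : A) + ε • ((a + (ε / 2) • (f 0 * f 1)) ^ 2
        + (b + (ε / 2) • (f 2 * f 0)) ^ 2 + (c + (ε / 2) • (f 1 * f 2)) ^ 2) := by
  have hO : (-(ε / 2)) • (f 0 * f 1 * f 2) + (a + (ε / 2) • (f 0 * f 1)) * f 2
        + (b + (ε / 2) • (f 2 * f 0)) * f 1 + (c + (ε / 2) • (f 1 * f 2)) * f 0
      = ε • (f 0 * f 1 * f 2) + (a * f 2 + b * f 1 + c * f 0) := by
    simp only [add_mul, smul_mul_assoc, hf.volume_cyclic.1, hf.volume_cyclic.2]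
    module
  have hwa := ((hfa 0).mul_left (hfa 1)).mul_left (hfa 2)
  have hwb := ((hfb 0).mul_left (hfb 1)).mul_left (hfb 2)
  have hwc := ((hfc 0).mul_left (hfc 1)).mul_left (hfc 2)
  have hwD : f 0 * f 1 * f 2 * (a * f 2 + b * f 1 + c * f 0)
      = ε • (a * (f 0 * f 1) + b * (f 2 * f 0) + c * (f 1 * f 2)) := by
    simp only [mul_add, hwa.left_comm, hwb.left_comm, hwc.left_comm, hf.volume_mul_two,
      hf.volume_mul_one, hf.volume_mul_zero, mul_smul_comm, smul_add]
  have hDw : (a * f 2 + b * f 1 + c * f 0) * (f 0 * f 1 * f 2)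
      = f 0 * f 1 * f 2 * (a * f 2 + b * f 1 + c * f 0) :=
    (((hwa.mul_right (hf.commute_volume 2).symm).add_right
      (hwb.mul_right (hf.commute_volume 1).symm)).add_right
      (hwc.mul_right (hf.commute_volume 0).symm)).eq.symm
  have sq_add : ∀ w D : A,
      (ε • w + D) ^ 2 = (ε ^ 2) • (w * w) + ε • (w * D + D * w) + D * D := by
    intro w D
    simp only [sq, add_mul, mul_add, smul_mul_assoc, mul_smul_comm]
    module
  have sq_O : ∀ {x : A} {i j : Fin 3}, i ≠ j → Commute (f i) x → Commute (f j) x →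
      (x + (ε / 2) • (f i * f j)) ^ 2 = x * x + ε • (x * (f i * f j)) - (ε ^ 4 / 4) • 1 := by
    intro x i j hij hi hj
    simp only [sq, add_mul, mul_add, smul_mul_assoc, mul_smul_comm, smul_smul,
      (hi.mul_left hj).eq, hf.mul_mul_self_of_ne hij]
    module
  rw [hO, sq_add, hDw, hwD, hf.volume_mul_self, hf.dirac_mul_self hab hca hbc hfa hfb hfc,
    sq_O (by decide) (hfa 0) (hfa 1), sq_O (by decide) (hfb 2) (hfb 0),
    sq_O (by decide) (hfc 1) (hfc 2)]
  linear_combination (norm := module)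
    hε • (a * (f 0 * f 1) + b * (f 2 * f 0) + c * (f 1 * f 2))
      - (ε * (ε ^ 2 + 1) / 4) • hε • (1 : A)

end IsCliffordFamily

end Clifford

/-- In the classical case (κ = 0), O_{123} = −(ε/2)e_1e_2e_3 + O_{12}e_3 + O_{31}e_2
+ O_{23}e_1 satisfies O_{123}² = −ε/4 + ε(O_{12}² + O_{31}² + O_{23}²). -/
theorem stmt19 {Cl : Type*} [Ring Cl] [Algebra ℂ Cl] (ε : ℂ) (hε : ε = 1 ∨ ε = -1)
    (e : Fin 3 → Cl)
    (hrel : ∀ i j, e i * e j + e j * e i = (2 * ε * (if i = j then 1 else 0)) • (1 : Cl)) :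
    let L : Fin 3 → Fin 3 → Module.End ℂ (MvPolynomial (Fin 3) ℂ) := fun a b =>
      LinearMap.mulLeft ℂ (X a) * (pderiv b).toLinearMap
        - LinearMap.mulLeft ℂ (X b) * (pderiv a).toLinearMap
    let one : Module.End ℂ (MvPolynomial (Fin 3) ℂ) := 1
    let O : Fin 3 → Fin 3 → (Module.End ℂ (MvPolynomial (Fin 3) ℂ) ⊗[ℂ] Cl) := fun a b =>
      L a b ⊗ₜ[ℂ] (1 : Cl) + (ε / 2) • (one ⊗ₜ[ℂ] (e a * e b))
    let O123 : Module.End ℂ (MvPolynomial (Fin 3) ℂ) ⊗[ℂ] Cl :=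
      (-(ε / 2)) • (one ⊗ₜ[ℂ] (e 0 * e 1 * e 2))
        + O 0 1 * (one ⊗ₜ[ℂ] e 2) + O 2 0 * (one ⊗ₜ[ℂ] e 1) + O 1 2 * (one ⊗ₜ[ℂ] e 0)
    O123 ^ 2 = (-(ε / 4)) • (1 : Module.End ℂ (MvPolynomial (Fin 3) ℂ) ⊗[ℂ] Cl)
        + ε • ((O 0 1) ^ 2 + (O 2 0) ^ 2 + (O 1 2) ^ 2) := by
  intro L one O O123
  have hε2 : ε ^ 2 = 1 := by rcases hε with rfl | rfl <;> norm_num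
  have hf : IsCliffordFamily ε (Algebra.TensorProduct.includeRight ∘ e) :=
    IsCliffordFamily.map (B := Module.End ℂ (MvPolynomial (Fin 3) ℂ) ⊗[ℂ] Cl) hrel _
  have hL : ∀ {u v w : Fin 3}, u ≠ v → v ≠ w → u ≠ w →
      L u v ⊗ₜ[ℂ] (1 : Cl) * L w u ⊗ₜ[ℂ] 1 - L w u ⊗ₜ[ℂ] 1 * L u v ⊗ₜ[ℂ] 1 = L v w ⊗ₜ[ℂ] 1 :=
    fun huv hvw huw => by
      rw [Algebra.TensorProduct.tmul_mul_tmul, Algebra.TensorProduct.tmul_mul_tmul, mul_one,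
        ← sub_tmul]
      exact congrArg (· ⊗ₜ[ℂ] (1 : Cl)) (angularMomentum_commutator huv hvw huw)
  have hcomm : ∀ (x : Module.End ℂ (MvPolynomial (Fin 3) ℂ)) i,
      Commute (Algebra.TensorProduct.includeRight (e i)) (x ⊗ₜ[ℂ] (1 : Cl)) :=
    fun x i => (Commute.one_left x).tmul (Commute.one_right (e i))
  have key := hf.sq_O123 hε2 (a := L 0 1 ⊗ₜ[ℂ] (1 : Cl)) (b := L 2 0 ⊗ₜ[ℂ] 1)
    (c := L 1 2 ⊗ₜ[ℂ] 1) (hL (by decide) (by decide) (by decide))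
    (hL (by decide) (by decide) (by decide)) (hL (by decide) (by decide) (by decide))
    (hcomm _) (hcomm _) (hcomm _)
  have hmul : ∀ x y : Cl, one ⊗ₜ[ℂ] (x * y) = (one ⊗ₜ[ℂ] x) * (one ⊗ₜ[ℂ] y) := fun x y => by
    rw [Algebra.TensorProduct.tmul_mul_tmul, one_mul]
  simp only [Function.comp_apply, Algebra.TensorProduct.includeRight_apply] at key
  simp only [O123, O, hmul]
  exact key
end
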